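/- arXiv:2004.01955 — 3 statements merged into one kernel-verified Lean document; each statement's English description precedes it below -/
import Mathlib

section
/- A 2-edge-coloured complete multipartite graph is colour-connected if and only if it is trail-colour-connected. -/
/-- A 2-edge-coloured (multi)graph: for each colour (`false` = colour 1 / red,
`true` = colour 2 / blue) a symmetric loopless adjacency relation. -/
structure TwoEC (V : Type) where
  adj : Bool → V → V → Prop
  symm : ∀ c u v, adj c u v → adj c v u
  loopless : ∀ c v, ¬ adj c v v

namespace TwoEC

variable {V : Type}

/-- A step of a walk: (source, colour, target). -/
abbrev Step (V : Type) := V × Bool × V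

def stepSrc (s : Step V) : V := s.1
def stepCol (s : Step V) : Bool := s.2.1
def stepTgt (s : Step V) : V := s.2.2
/-- The (coloured, undirected) edge used by a step. -/
def stepEdge (s : Step V) : Bool × Sym2 V := (s.2.1, s(s.1, s.2.2))

/-- `L` is an alternating walk from `u` to `v` (nonempty list of steps,
consecutive steps share a vertex and differ in colour). -/
def IsAltWalk (G : TwoEC V) (u v : V) (L : List (Step V)) : Prop :=
  L ≠ [] ∧ L.head?.map stepSrc = some u ∧ L.getLast?.map stepTgt = some v ∧
  (∀ s ∈ L, G.adj (stepCol s) (stepSrc s) (stepTgt s)) ∧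
  L.Chain' (fun s t => stepTgt s = stepSrc t ∧ stepCol s ≠ stepCol t)

def firstColour (L : List (Step V)) : Option Bool := L.head?.map stepCol
def lastColour (L : List (Step V)) : Option Bool := L.getLast?.map stepCol

/-- An alternating trail: an alternating walk using no (coloured) edge twice. -/
def IsAltTrail (G : TwoEC V) (u v : V) (L : List (Step V)) : Prop :=
  G.IsAltWalk u v L ∧ (L.map stepEdge).Nodup

/-- An alternating path: an alternating walk with no repeated vertex. -/
def IsAltPath (G : TwoEC V) (u v : V) (L : List (Step V)) : Prop :=
  G.IsAltWalk u v L ∧ (L.map stepSrc ++ [v]).Nodup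

/-- A (nonempty) closed alternating trail: also the last and first colours differ. -/
def IsClosedAltTrail (G : TwoEC V) (L : List (Step V)) : Prop :=
  ∃ u, G.IsAltTrail u u L ∧ lastColour L ≠ firstColour L

/-- An alternating cycle: a closed alternating walk with pairwise distinct vertices. -/
def IsAltCycle (G : TwoEC V) (L : List (Step V)) : Prop :=
  (∃ u, G.IsAltWalk u u L) ∧ (L.map stepSrc).Nodup ∧ lastColour L ≠ firstColour L

/-- The walk `L` visits the vertex `v`. -/
def visits (L : List (Step V)) (v : V) : Prop := v ∈ L.map stepSrc ∨ v ∈ L.map stepTgt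

/-- A spanning closed alternating trail exists. -/
def Supereulerian (G : TwoEC V) : Prop :=
  ∃ L, G.IsClosedAltTrail L ∧ ∀ v : V, visits L v

/-- Colour-connectivity: between any two distinct vertices there are two alternating
paths whose union is an alternating closed walk (equivalently, they start with
different colours and end with different colours). -/
def ColourConnected (G : TwoEC V) : Prop :=
  ∀ u v : V, u ≠ v → ∃ P₁ P₂, G.IsAltPath u v P₁ ∧ G.IsAltPath u v P₂ ∧
    firstColour P₁ ≠ firstColour P₂ ∧ lastColour P₁ ≠ lastColour P₂

/-- Trail-colour-connectivity: same as colour-connectivity but with trails. -/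
def TrailColourConnected (G : TwoEC V) : Prop :=
  ∀ u v : V, u ≠ v → ∃ T₁ T₂, G.IsAltTrail u v T₁ ∧ G.IsAltTrail u v T₂ ∧
    firstColour T₁ ≠ firstColour T₂ ∧ lastColour T₁ ≠ lastColour T₂

/-- The induced 2-edge-coloured subgraph on a set of vertices. -/
def induce (G : TwoEC V) (S : Set V) : TwoEC S where
  adj c u v := G.adj c u v
  symm := fun c u v h => G.symm c u v h
  loopless := fun c v => G.loopless c v

/-- An eulerian factor: a partition of the vertex set into classes each of which
induces a supereulerian subgraph. -/
def EulerianFactor (G : TwoEC V) : Prop :=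
  ∃ r : Setoid V, ∀ v : V, Supereulerian (G.induce {u | r.r u v})

/-- `H` is an extension of `G`: obtained by blowing up each vertex of `G` into a
nonempty independent set, preserving colours. -/
def IsExtension (G : TwoEC V) {W : Type} (H : TwoEC W) : Prop :=
  ∃ f : W → V, Function.Surjective f ∧ ∀ c x y, H.adj c x y ↔ G.adj c (f x) (f y)

/-- M-closed: endpoints of every monochromatic path of length two are adjacent. -/
def MClosed (G : TwoEC V) : Prop :=
  ∀ c x y z, G.adj c x y → G.adj c y z → x ≠ z → ∃ c', G.adj c' x z

/-- Complete multipartite 2-edge-coloured graph: two vertices are adjacent (in some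
colour) iff they lie in different parts. -/
def IsCompleteMultipartite (G : TwoEC V) : Prop :=
  ∃ p : V → V, ∀ u v, (∃ c, G.adj c u v) ↔ p u ≠ p v

/-- Complete bipartite 2-edge-coloured graph (with both parts nonempty). -/
def IsCompleteBipartite (G : TwoEC V) : Prop :=
  ∃ p : V → Bool, (∀ b, ∃ x, p x = b) ∧ ∀ u v, (∃ c, G.adj c u v) ↔ p u ≠ p v

/-- A 2-edge-coloured complete graph: each pair of distinct vertices is joined by
exactly one edge, which has exactly one colour. -/
def IsComplete (G : TwoEC V) : Prop :=
  ∀ u v : V, u ≠ v →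
    ((G.adj false u v ∨ G.adj true u v) ∧ ¬ (G.adj false u v ∧ G.adj true u v))

/-- An alternating cycle factor: vertex-disjoint alternating cycles covering `V`. -/
def AltCycleFactor (G : TwoEC V) : Prop :=
  ∃ Ls : Set (List (Step V)), (∀ L ∈ Ls, G.IsAltCycle L) ∧
    (∀ v : V, ∃ L ∈ Ls, visits L v) ∧
    (∀ L₁ ∈ Ls, ∀ L₂ ∈ Ls, L₁ ≠ L₂ → ∀ v : V, ¬ (visits L₁ v ∧ visits L₂ v))

/-- An alternating hamiltonian cycle. -/
def IsAltHamCycle (G : TwoEC V) (L : List (Step V)) : Prop :=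
  G.IsAltCycle L ∧ ∀ v : V, visits L v

/-- Connectivity of the underlying (uncoloured) graph. -/
def Connected (G : TwoEC V) : Prop :=
  ∀ u v : V, Relation.ReflTransGen (fun a b => ∃ c, G.adj c a b) u v

end TwoEC

/-!
A repeated vertex `x i = x j` on an alternating walk between distinct vertices lets one shorten
the walk. If `j - i` is even, cutting out the closed subwalk keeps both end colours. If `j - i`
is odd (hence at least 3, as there are no loops), two consecutive inner vertices of the closed
subwalk lie in different parts, so one of them is adjacent to any prescribed vertex; leaving the
closed subwalk there, forwards or backwards according to the colour of that edge, gives a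
shorter walk with the same first colour, and, applied to the reversed walk, a shorter walk with
the same last colour. By induction on the length, a walk with end colours `(s, t)` therefore
yields an alternating path with end colours `(s, t)`, or two with `(!s, t)` and `(s, !t)`;
either way two trails as in trail-colour-connectivity give two paths as in colour-connectivity.
-/

namespace TwoEC

variable {V : Type}

def altColour (s : Bool) (k : ℕ) : Bool := if k % 2 = 0 then s else !s

@[simp] lemma altColour_zero (s : Bool) : altColour s 0 = s := rfl

lemma altColour_congr (s : Bool) {k l : ℕ} (h : k % 2 = l % 2) :
    altColour s k = altColour s l := by
  rw [altColour, altColour, h]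

lemma altColour_add (s : Bool) (k l : ℕ) :
    altColour s (k + l) = altColour (altColour s k) l := by
  unfold altColour
  rcases Nat.mod_two_eq_zero_or_one k with hk | hk <;>
    rcases Nat.mod_two_eq_zero_or_one l with hl | hl <;>
    simp [hk, hl, Nat.add_mod]

lemma altColour_succ (s : Bool) (k : ℕ) : altColour s (k + 1) = !altColour s k := by
  rw [altColour_add]; unfold altColour; simp

lemma altColour_altColour_self (s : Bool) (k : ℕ) : altColour (altColour s k) k = s := by
  rw [← altColour_add, altColour_congr s (l := 0) (by omega), altColour_zero]

/-- `x 0, …, x n` is an alternating walk from `u` to `v` whose `k`-th edge has colour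
`altColour s k`. -/
structure IsAltSeq (G : TwoEC V) (u v : V) (s : Bool) (n : ℕ) (x : ℕ → V) : Prop where
  start : x 0 = u
  finish : x n = v
  adj : ∀ k < n, G.adj (altColour s k) (x k) (x (k + 1))

variable {G : TwoEC V} {u v w : V} {s t : Bool} {n : ℕ} {x : ℕ → V}

namespace IsAltSeq

lemma one_le (h : G.IsAltSeq u v s n x) (huv : u ≠ v) : 1 ≤ n := by
  rcases Nat.eq_zero_or_pos n with rfl | hn
  · exact absurd (h.start.symm.trans h.finish) huv
  · exact hn

lemma single {a b : V} (hab : G.adj s a b) :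
    G.IsAltSeq a b s 1 (fun k => if k = 0 then a else b) := by
  refine ⟨rfl, rfl, fun k hk => ?_⟩
  obtain rfl : k = 0 := by omega
  simpa using hab

lemma take (h : G.IsAltSeq u v s n x) {i : ℕ} (hi : i ≤ n) : G.IsAltSeq u (x i) s i x :=
  ⟨h.start, rfl, fun k hk => h.adj k (by omega)⟩

lemma segment (h : G.IsAltSeq u v s n x) {a b : ℕ} (hab : a ≤ b) (hb : b ≤ n) :
    G.IsAltSeq (x a) (x b) (altColour s a) (b - a) (fun k => x (a + k)) := by
  refine ⟨rfl, by rw [Nat.add_sub_cancel' hab], fun k hk => ?_⟩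
  rw [← altColour_add]
  exact h.adj (a + k) (by omega)

lemma drop (h : G.IsAltSeq u v s n x) {j : ℕ} (hj : j ≤ n) :
    G.IsAltSeq (x j) v (altColour s j) (n - j) (fun k => x (j + k)) :=
  h.finish ▸ h.segment hj le_rfl

lemma append {m m' : ℕ} {y : ℕ → V} (h : G.IsAltSeq u w s m x)
    (h' : G.IsAltSeq w v (altColour s m) m' y) :
    G.IsAltSeq u v s (m + m') (fun k => if k < m then x k else y (k - m)) := by
  refine ⟨?_, by simp [h'.finish], fun k hk => ?_⟩
  · rcases Nat.eq_zero_or_pos m with rfl | hm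
    · simp [h'.start, ← h.finish, h.start]
    · simp [hm, h.start]
  · by_cases hkm : k + 1 < m
    · simpa [hkm, show k < m by omega] using h.adj k (by omega)
    · by_cases hk : k + 1 = m
      · subst hk
        simpa [h.finish, ← h'.start] using h.adj k (by omega)
      · have := h'.adj (k - m) (by omega)
        rw [← altColour_add, Nat.add_sub_cancel' (by omega)] at this
        simpa [hkm, show ¬k < m by omega, show k + 1 - m = k - m + 1 by omega] using this

lemma reverse (h : G.IsAltSeq u v s n x) (hn : 1 ≤ n) :
    G.IsAltSeq v u (altColour s (n - 1)) n (fun k => x (n - k)) := by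
  refine ⟨by simp [h.finish], by simp [h.start], fun k hk => ?_⟩
  have hadj := G.symm _ _ _ (h.adj (n - (k + 1)) (by omega))
  rwa [← altColour_add, altColour_congr s (l := n - (k + 1)) (by omega),
    ← show n - (k + 1) + 1 = n - k by omega]

end IsAltSeq

def walkOfSeq (x : ℕ → V) (s : Bool) (n : ℕ) : List (Step V) :=
  (List.range n).map fun k => (x k, altColour s k, x (k + 1))

@[simp] lemma length_walkOfSeq : (walkOfSeq x s n).length = n := by
  simp [walkOfSeq]

@[simp] lemma getElem_walkOfSeq {k : ℕ} (hk : k < (walkOfSeq x s n).length) :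
    (walkOfSeq x s n)[k] = (x k, altColour s k, x (k + 1)) := by
  simp [walkOfSeq]

lemma head?_walkOfSeq (hn : 1 ≤ n) : (walkOfSeq x s n).head? = some (x 0, s, x 1) := by
  simp [walkOfSeq, List.head?_range, show n ≠ 0 by omega]

lemma getLast?_walkOfSeq (hn : 1 ≤ n) :
    (walkOfSeq x s n).getLast? = some (x (n - 1), altColour s (n - 1), x n) := by
  simp [walkOfSeq, List.getLast?_range, show n ≠ 0 by omega, Nat.sub_add_cancel hn]

lemma firstColour_walkOfSeq (hn : 1 ≤ n) : firstColour (walkOfSeq x s n) = some s := by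
  simp [firstColour, head?_walkOfSeq hn, stepCol]

lemma lastColour_walkOfSeq (hn : 1 ≤ n) :
    lastColour (walkOfSeq x s n) = some (altColour s (n - 1)) := by
  simp [lastColour, getLast?_walkOfSeq hn, stepCol]

lemma map_stepSrc_walkOfSeq :
    (walkOfSeq x s n).map stepSrc ++ [x n] = (List.range (n + 1)).map x := by
  simp [walkOfSeq, List.range_succ, Function.comp_def, stepSrc]

namespace IsAltSeq

lemma isAltWalk (h : G.IsAltSeq u v s n x) (hn : 1 ≤ n) :
    G.IsAltWalk u v (walkOfSeq x s n) := by
  refine ⟨?_, by simp [head?_walkOfSeq hn, stepSrc, h.start],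
    by simp [getLast?_walkOfSeq hn, stepTgt, h.finish], ?_, ?_⟩
  · rw [← List.length_pos_iff, length_walkOfSeq]; omega
  · simp only [walkOfSeq, List.mem_map, List.mem_range]
    rintro _ ⟨k, hk, rfl⟩
    exact h.adj k hk
  · refine List.isChain_iff_getElem.mpr fun k hk => ?_
    simp [stepTgt, stepSrc, stepCol, altColour_succ]

lemma isAltPath (h : G.IsAltSeq u v s n x) (hn : 1 ≤ n) (hinj : Set.InjOn x (Set.Iic n)) :
    G.IsAltPath u v (walkOfSeq x s n) := by
  refine ⟨h.isAltWalk hn, ?_⟩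
  rw [← h.finish, map_stepSrc_walkOfSeq]
  exact List.nodup_range.map_on fun a ha b hb hab =>
    hinj (Nat.lt_succ_iff.mp (List.mem_range.mp ha)) (Nat.lt_succ_iff.mp (List.mem_range.mp hb)) hab

lemma isAltTrail (h : G.IsAltSeq u v s n x) (hn : 1 ≤ n) (hinj : Set.InjOn x (Set.Iic n)) :
    G.IsAltTrail u v (walkOfSeq x s n) := by
  refine ⟨h.isAltWalk hn, ?_⟩
  simp only [walkOfSeq, List.map_map]
  refine List.nodup_range.map_on fun a ha b hb hab => ?_
  simp only [List.mem_range] at ha hb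
  have hinj' : ∀ {k l}, k ≤ n → l ≤ n → x k = x l → k = l := fun hk hl => hinj hk hl
  rcases Sym2.eq_iff.mp (congrArg Prod.snd hab) with ⟨h₁, -⟩ | ⟨h₁, h₂⟩
  · exact hinj' (by omega) (by omega) h₁
  · have := hinj' (by omega) (by omega) h₁
    have := hinj' (by omega) (by omega) h₂
    omega

end IsAltSeq

lemma IsAltWalk.exists_eq_walkOfSeq {L : List (Step V)} (h : G.IsAltWalk u v L) :
    ∃ n s x, 1 ≤ n ∧ G.IsAltSeq u v s n x ∧ L = walkOfSeq x s n := by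
  obtain ⟨hne, hhead, hlast, hadj, hchain⟩ := h
  have hn : 0 < L.length := List.length_pos_iff.mpr hne
  have hchain' := List.isChain_iff_getElem.mp hchain
  set x : ℕ → V := fun k => if hk : k < L.length then stepSrc L[k] else v with hx
  set s := stepCol L[0]
  have hcol : ∀ k (hk : k < L.length), stepCol L[k] = altColour s k := by
    intro k hk
    induction k with
    | zero => rfl
    | succ k ih =>
      rw [altColour_succ, ← ih (by omega)]
      exact Bool.eq_not_iff.mpr (hchain' k hk).2.symm
  have htgt : ∀ k (hk : k < L.length), stepTgt L[k] = x (k + 1) := by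
    intro k hk
    by_cases hk' : k + 1 < L.length
    · simpa [hx, hk'] using (hchain' k hk').1
    · obtain rfl : k = L.length - 1 := by omega
      simpa [hx, List.getLast?_eq_getElem?, hn, show ¬L.length - 1 + 1 < L.length by omega]
        using hlast
  have hL : L = walkOfSeq x s L.length := by
    refine List.ext_getElem (by simp) fun k hk _ => ?_
    rw [getElem_walkOfSeq, ← hcol k hk, ← htgt k hk]
    simp [hx, hk, stepSrc, stepCol, stepTgt]
  refine ⟨L.length, s, x, hn, ⟨?_, by simp [hx], fun k hk => ?_⟩, hL⟩
  · simpa [hx, hn, List.head?_eq_getElem?] using hhead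
  · have := hadj L[k] (List.getElem_mem hk)
    rwa [hcol k hk, htgt k hk, show stepSrc L[k] = x k by simp [hx, hk]] at this

lemma IsAltPath.isAltTrail {P : List (Step V)} (h : G.IsAltPath u v P) :
    G.IsAltTrail u v P := by
  obtain ⟨n, s, x, hn, hx, rfl⟩ := h.1.exists_eq_walkOfSeq
  have hnodup := h.2
  rw [← hx.finish, map_stepSrc_walkOfSeq] at hnodup
  exact hx.isAltTrail hn fun a ha b hb hab => List.inj_on_of_nodup_map hnodup
    (List.mem_range.mpr (Nat.lt_succ_of_le ha)) (List.mem_range.mpr (Nat.lt_succ_of_le hb)) hab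

def HasAltPath (G : TwoEC V) (u v : V) (s t : Bool) : Prop :=
  ∃ P, G.IsAltPath u v P ∧ firstColour P = some s ∧ lastColour P = some t

def HasAltPathOrFlips (G : TwoEC V) (u v : V) (s t : Bool) : Prop :=
  G.HasAltPath u v s t ∨ (G.HasAltPath u v (!s) t ∧ G.HasAltPath u v s (!t))

lemma IsAltSeq.hasAltPath (h : G.IsAltSeq u v s n x) (hn : 1 ≤ n)
    (hinj : Set.InjOn x (Set.Iic n)) : G.HasAltPath u v s (altColour s (n - 1)) :=
  ⟨_, h.isAltPath hn hinj, firstColour_walkOfSeq hn, lastColour_walkOfSeq hn⟩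

lemma HasAltPathOrFlips.of_start_of_end {γ δ : Bool} (h₁ : G.HasAltPathOrFlips u v s γ)
    (h₂ : G.HasAltPathOrFlips u v δ t) : G.HasAltPathOrFlips u v s t := by
  rcases Bool.eq_or_eq_not γ t with rfl | rfl
  · exact h₁
  rcases Bool.eq_or_eq_not δ s with rfl | rfl
  · exact h₂
  unfold HasAltPathOrFlips at *
  rw [Bool.not_not] at h₁ h₂
  tauto

lemma HasAltPathOrFlips.exists_altPaths (h₁ : G.HasAltPathOrFlips u v s t)
    (h₂ : G.HasAltPathOrFlips u v (!s) (!t)) :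
    ∃ P₁ P₂, G.IsAltPath u v P₁ ∧ G.IsAltPath u v P₂ ∧
      firstColour P₁ ≠ firstColour P₂ ∧ lastColour P₁ ≠ lastColour P₂ := by
  have pair : ∀ {a b : Bool}, G.HasAltPath u v a b → G.HasAltPath u v (!a) (!b) →
      ∃ P₁ P₂, G.IsAltPath u v P₁ ∧ G.IsAltPath u v P₂ ∧
        firstColour P₁ ≠ firstColour P₂ ∧ lastColour P₁ ≠ lastColour P₂ := by
    rintro a b ⟨P₁, hP₁, ha₁, hb₁⟩ ⟨P₂, hP₂, ha₂, hb₂⟩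
    exact ⟨P₁, P₂, hP₁, hP₂, by simp [ha₁, ha₂], by simp [hb₁, hb₂]⟩
  rcases h₁ with h₁ | ⟨h₁, h₁'⟩
  · rcases h₂ with h₂ | ⟨h₂, h₂'⟩
    · exact pair h₁ h₂
    · exact pair (by simpa using h₂) h₂'
  · exact pair h₁' (by simpa using h₁)

lemma IsCompleteMultipartite.exists_adj_or_exists_adj (hG : G.IsCompleteMultipartite)
    {c : Bool} {a b : V} (hab : G.adj c a b) (z : V) :
    (∃ γ, G.adj γ a z) ∨ ∃ γ, G.adj γ b z := by
  obtain ⟨p, hp⟩ := hG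
  have hne := (hp a b).1 ⟨c, hab⟩
  by_cases h : p a = p z
  · exact Or.inr ((hp b z).2 fun h' => hne (h.trans h'.symm))
  · exact Or.inl ((hp a z).2 h)

namespace IsAltSeq

variable {i j : ℕ}

lemma exists_shorter_of_even (h : G.IsAltSeq u v s n x) (huv : u ≠ v) (hij : i < j)
    (hj : j ≤ n) (hx : x i = x j) (hpar : (j - i) % 2 = 0) :
    ∃ m < n, ∃ y, G.IsAltSeq u v s m y ∧ altColour s (m - 1) = altColour s (n - 1) := by
  have htail := h.drop hj
  rw [altColour_congr s (show j % 2 = i % 2 by omega), ← hx] at htail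
  have hy := (h.take (by omega)).append htail
  have := hy.one_le huv
  exact ⟨i + (n - j), by omega, _, hy, altColour_congr s (by omega)⟩

lemma add_three_le_of_odd (h : G.IsAltSeq u v s n x) (hij : i < j) (hj : j ≤ n)
    (hx : x i = x j) (hpar : (j - i) % 2 = 1) : i + 3 ≤ j := by
  by_contra hlt
  obtain rfl : j = i + 1 := by omega
  have hadj := h.adj i (by omega)
  rw [hx] at hadj
  exact G.loopless _ _ hadj

lemma exists_shorter_of_odd_of_start (hG : G.IsCompleteMultipartite)
    (h : G.IsAltSeq u v s n x) (hij : i < j) (hj : j ≤ n) (hx : x i = x j)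
    (hpar : (j - i) % 2 = 1) : ∃ m < n, ∃ y, G.IsAltSeq u v s m y := by
  have h3 := h.add_three_le_of_odd hij hj hx hpar
  rcases hj.lt_or_eq with hjn | rfl
  · obtain ⟨r, hr₁, hr₂, γ, hγ⟩ : ∃ r, i + 1 ≤ r ∧ r ≤ j - 1 ∧ ∃ γ, G.adj γ (x r) v := by
      rcases hG.exists_adj_or_exists_adj (h.adj (i + 1) (by omega)) v with hv | hv
      · exact ⟨i + 1, by omega, by omega, hv⟩
      · exact ⟨i + 2, by omega, by omega, hv⟩
    rcases Bool.eq_or_eq_not γ (altColour s r) with rfl | rfl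
    · exact ⟨r + 1, by omega, _, (h.take (by omega)).append (single hγ)⟩
    · -- go back around the odd closed subwalk from `x j = x i` to `x r`
      have hback := (h.segment (a := r) (b := j) (by omega) hj).reverse (by omega)
      rw [← altColour_add, altColour_congr s (l := i) (by omega), ← hx] at hback
      rw [← altColour_succ, altColour_congr s (l := i + (j - r)) (by omega)] at hγ
      exact ⟨i + (j - r) + 1, by omega, _, ((h.take (by omega)).append hback).append (single hγ)⟩
  · have hprefix := h.take hij.le
    rw [hx, h.finish] at hprefix
    exact ⟨i, hij, _, hprefix⟩

lemma exists_shorter_of_odd_of_end (hG : G.IsCompleteMultipartite)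
    (h : G.IsAltSeq u v s n x) (huv : u ≠ v) (hij : i < j) (hj : j ≤ n) (hx : x i = x j)
    (hpar : (j - i) % 2 = 1) :
    ∃ m < n, ∃ γ y, G.IsAltSeq u v γ m y ∧ altColour γ (m - 1) = altColour s (n - 1) := by
  obtain ⟨m, hm, y, hy⟩ := (h.reverse (h.one_le huv)).exists_shorter_of_odd_of_start hG
    (i := n - j) (j := n - i) (by omega) (by omega)
    (by simp only [Nat.sub_sub_self hj, Nat.sub_sub_self (hij.le.trans hj), hx]) (by omega)
  exact ⟨m, hm, _, _, hy.reverse (hy.one_le huv.symm), altColour_altColour_self _ _⟩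

theorem hasAltPathOrFlips (hG : G.IsCompleteMultipartite) (huv : u ≠ v)
    (h : G.IsAltSeq u v s n x) : G.HasAltPathOrFlips u v s (altColour s (n - 1)) := by
  induction n using Nat.strong_induction_on generalizing s x with
  | _ n ih =>
  by_cases hrep : ∃ i j, i < j ∧ j ≤ n ∧ x i = x j
  · obtain ⟨i, j, hij, hj, hx⟩ := hrep
    rcases Nat.mod_two_eq_zero_or_one (j - i) with hpar | hpar
    · obtain ⟨m, hm, y, hy, hcol⟩ := h.exists_shorter_of_even huv hij hj hx hpar
      exact hcol ▸ ih m hm hy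
    · obtain ⟨m, hm, y, hy⟩ := h.exists_shorter_of_odd_of_start hG hij hj hx hpar
      obtain ⟨m', hm', γ, y', hy', hcol⟩ := h.exists_shorter_of_odd_of_end hG huv hij hj hx hpar
      exact (ih m hm hy).of_start_of_end (hcol ▸ ih m' hm' hy')
  · refine .inl (h.hasAltPath (h.one_le huv) fun k hk l hl hkl => ?_)
    by_contra hne
    rcases Nat.lt_or_gt_of_ne hne with hlt | hlt
    · exact hrep ⟨k, l, hlt, hl, hkl⟩
    · exact hrep ⟨l, k, hlt, hk, hkl.symm⟩

end IsAltSeq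

lemma IsCompleteMultipartite.exists_altPaths_of_altWalks (hG : G.IsCompleteMultipartite)
    (huv : u ≠ v) {W₁ W₂ : List (Step V)} (h₁ : G.IsAltWalk u v W₁) (h₂ : G.IsAltWalk u v W₂)
    (hfirst : firstColour W₁ ≠ firstColour W₂) (hlast : lastColour W₁ ≠ lastColour W₂) :
    ∃ P₁ P₂, G.IsAltPath u v P₁ ∧ G.IsAltPath u v P₂ ∧
      firstColour P₁ ≠ firstColour P₂ ∧ lastColour P₁ ≠ lastColour P₂ := by
  obtain ⟨n₁, s₁, x₁, hn₁, hx₁, rfl⟩ := h₁.exists_eq_walkOfSeq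
  obtain ⟨n₂, s₂, x₂, hn₂, hx₂, rfl⟩ := h₂.exists_eq_walkOfSeq
  simp only [firstColour_walkOfSeq, lastColour_walkOfSeq, hn₁, hn₂, ne_eq, Option.some.injEq,
    ← Bool.eq_not_iff] at hfirst hlast
  have H₁ := hx₁.hasAltPathOrFlips hG huv
  rw [hlast, hfirst] at H₁
  exact (hx₂.hasAltPathOrFlips hG huv).exists_altPaths H₁

end TwoEC

open TwoEC in
theorem completeMultipartite_colourConnected_iff_trailColourConnected {V : Type}
    (G : TwoEC V) (hcm : G.IsCompleteMultipartite) :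
    G.ColourConnected ↔ G.TrailColourConnected := by
  refine ⟨fun h u v huv => ?_, fun h u v huv => ?_⟩
  · obtain ⟨P₁, P₂, h₁, h₂, hfirst, hlast⟩ := h u v huv
    exact ⟨P₁, P₂, h₁.isAltTrail, h₂.isAltTrail, hfirst, hlast⟩
  · obtain ⟨T₁, T₂, h₁, h₂, hfirst, hlast⟩ := h u v huv
    exact hcm.exists_altPaths_of_altWalks huv h₁.1 h₂.1 hfirst hlast
end

section
/- Let C1 = x_1x_2...x_{2k}x_1 and C2 = y_1y_2...y_{2r}y_1 be vertex-disjoint alternating cycles in a 2-edge-coloured graph G. If there exist indices i,j such that the edges x_iy_j and x_{i+1}y_{j+1} exist in G and φ(x_iy_j) = φ(x_ix_{i+1}) = φ(x_{i+1}y_{j+1}) = φ(y_jy_{j+1}), then G contains an alternating cycle C with V(C) = V(C1) ∪ V(C2). -/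
/-!
Rotate `C₁` so that it starts with the step `x_i → x_{i+1}`, and traverse `C₂` backwards so that
it starts with `y_{j+1} → y_j`. Replacing these two steps by `x_i → y_j` and `y_{j+1} → x_{i+1}`,
which carry the same colour, leaves the colour pattern at all four endpoints unchanged, so the
result is a single alternating cycle through the vertices of both.
-/

theorem List.IsChain.cons_append_singleton_of_imp {α : Type*} {R : α → α → Prop}
    {a a' b b' : α} {l : List α} (h : List.IsChain R (a :: (l ++ [b])))
    (ha : ∀ z, R a z → R a' z) (hb : ∀ z, R z b → R z b') :
    List.IsChain R (a' :: (l ++ [b'])) := by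
  induction l generalizing a a' with
  | nil => exact List.isChain_pair.2 (hb _ (ha _ (List.isChain_pair.1 h)))
  | cons x l ih =>
    rw [List.cons_append, List.isChain_cons_cons] at h ⊢
    exact ⟨ha _ h.1, ih h.2 (fun _ => id)⟩

theorem List.exists_cons_isRotated_of_mem {α : Type*} {a : α} {l : List α} (h : a ∈ l) :
    ∃ m, (a :: m) ~r l := by
  obtain ⟨s, t, rfl⟩ := List.append_of_mem h
  exact ⟨t ++ s, by simpa using (List.isRotated_append (l := s) (l' := a :: t)).symm⟩

theorem Cycle.Chain.reverse {α : Type*} {r : α → α → Prop} {s : Cycle α} (h : s.Chain r) :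
    s.reverse.Chain (flip r) := by
  induction s with
  | nil => exact Cycle.Chain.nil _
  | cons a l _ =>
    have hrot : (a :: l).reverse ~r a :: l.reverse := by
      simpa using (List.isRotated_append (l := l.reverse) (l' := [a]))
    rw [Cycle.reverse_coe, Cycle.coe_eq_coe.2 hrot, Cycle.chain_coe_cons]
    rw [Cycle.chain_coe_cons] at h
    convert (List.isChain_reverse (R := flip r)).2 h using 1
    simp

namespace TwoEC

variable {V : Type}

def AltNext (s t : Step V) : Prop :=
  stepTgt s = stepSrc t ∧ stepCol s ≠ stepCol t

theorem isAltCycle_iff {G : TwoEC V} {L : List (Step V)} :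
    G.IsAltCycle L ↔ L ≠ [] ∧ (∀ s ∈ L, G.adj (stepCol s) (stepSrc s) (stepTgt s)) ∧
      Cycle.Chain AltNext (L : Cycle (Step V)) ∧ (L.map stepSrc).Nodup := by
  cases L with
  | nil => simp [IsAltCycle, IsAltWalk]
  | cons a l =>
    simp only [IsAltCycle, IsAltWalk, lastColour, firstColour, List.head?_cons,
      List.getLast?_eq_some_getLast (List.cons_ne_nil a l), Option.map_some, Option.some_inj,
      Cycle.chain_coe_cons, ← List.cons_append, List.isChain_append, List.isChain_singleton,
      Option.mem_def, forall_eq', ne_eq]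
    constructor
    · rintro ⟨⟨_, hne, rfl, hlast, hadj, hch⟩, hnd, hcol⟩
      exact ⟨hne, hadj, ⟨hch, trivial, hlast, hcol⟩, hnd⟩
    · rintro ⟨hne, hadj, ⟨hch, -, hlast, hcol⟩, hnd⟩
      exact ⟨⟨_, hne, rfl, hlast, hadj, hch⟩, hnd, hcol⟩

theorem visits_iff_of_perm {L L' : List (Step V)} (h : L.Perm L') (v : V) :
    visits L v ↔ visits L' v := by
  simp only [visits, (h.map stepSrc).mem_iff, (h.map stepTgt).mem_iff]

def stepReverse (s : Step V) : Step V := (stepTgt s, stepCol s, stepSrc s)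

def walkReverse (L : List (Step V)) : List (Step V) := (L.map stepReverse).reverse

theorem stepReverse_mem_walkReverse {L : List (Step V)} {s : Step V} (hs : s ∈ L) :
    stepReverse s ∈ walkReverse L :=
  List.mem_reverse.2 (List.mem_map_of_mem hs)

theorem map_stepSrc_walkReverse (L : List (Step V)) :
    (walkReverse L).map stepSrc = (L.map stepTgt).reverse := by
  simp only [walkReverse, List.map_reverse, List.map_map]
  rfl

theorem visits_walkReverse {L : List (Step V)} {v : V} :
    visits (walkReverse L) v ↔ visits L v := by
  simp only [visits, walkReverse, List.map_reverse, List.mem_reverse, List.map_map]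
  exact or_comm

def splice (s t : Step V) (P Q : List (Step V)) : List (Step V) :=
  (stepSrc s, stepCol s, stepTgt t) :: (Q ++ (stepSrc t, stepCol s, stepTgt s) :: P)

theorem visits_splice {s t : Step V} {P Q : List (Step V)} {v : V} :
    visits (splice s t P Q) v ↔ visits (s :: P) v ∨ visits (t :: Q) v := by
  simp only [visits, splice, List.map_cons, List.map_append, List.mem_cons, List.mem_append]
  tauto

theorem map_stepSrc_splice_perm (s t : Step V) (P Q : List (Step V)) :
    ((splice s t P Q).map stepSrc).Perm ((s :: P).map stepSrc ++ (t :: Q).map stepSrc) := by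
  simp only [splice, List.map_cons, List.map_append, List.cons_append]
  exact ((List.perm_middle.trans (List.perm_append_comm.cons _)).trans
    List.perm_middle.symm).cons _

namespace IsAltCycle

variable {G : TwoEC V} {L : List (Step V)}

theorem of_isRotated {L' : List (Step V)} (hL : G.IsAltCycle L) (h : L ~r L') :
    G.IsAltCycle L' := by
  obtain ⟨hne, hadj, hch, hnd⟩ := isAltCycle_iff.1 hL
  refine isAltCycle_iff.2 ⟨?_, fun s hs => hadj s (h.perm.mem_iff.2 hs),
    Cycle.coe_eq_coe.2 h ▸ hch, (h.perm.map _).nodup_iff.1 hnd⟩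
  rintro rfl
  exact hne (List.isRotated_nil_iff.1 h)

theorem map_stepTgt_perm (hL : G.IsAltCycle L) : (L.map stepTgt).Perm (L.map stepSrc) := by
  obtain ⟨hne, -, hch, -⟩ := isAltCycle_iff.1 hL
  obtain ⟨a, l, rfl⟩ := List.exists_cons_of_ne_nil hne
  rw [Cycle.chain_coe_cons, ← List.cons_append,
    List.isChain_cons_append_singleton_iff_forall₂] at hch
  have hshift : (a :: l).map stepTgt = (l ++ [a]).map stepSrc := by
    rw [← List.forall₂_eq_eq_eq, List.forall₂_map_left_iff, List.forall₂_map_right_iff]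
    exact hch.imp fun _ _ h => h.1
  rw [hshift]
  exact (List.perm_append_singleton a l).map stepSrc

theorem walkReverse (hL : G.IsAltCycle L) : G.IsAltCycle (walkReverse L) := by
  obtain ⟨hne, hadj, hch, hnd⟩ := isAltCycle_iff.1 hL
  refine isAltCycle_iff.2 ⟨by simpa [TwoEC.walkReverse] using hne, ?_, ?_, ?_⟩
  · simp only [TwoEC.walkReverse, List.mem_reverse, List.mem_map]
    rintro _ ⟨s, hs, rfl⟩
    exact G.symm _ _ _ (hadj s hs)
  · rw [TwoEC.walkReverse, ← Cycle.reverse_coe, ← Cycle.map_coe]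
    exact ((Cycle.chain_map _).2 (hch.imp fun _ _ h => ⟨h.1.symm, h.2.symm⟩)).reverse
  · rw [map_stepSrc_walkReverse, List.nodup_reverse]
    exact hL.map_stepTgt_perm.nodup_iff.2 hnd

theorem splice {s t : Step V} {P Q : List (Step V)} (hP : G.IsAltCycle (s :: P))
    (hQ : G.IsAltCycle (t :: Q)) (hcol : stepCol s = stepCol t)
    (hst : G.adj (stepCol s) (stepSrc s) (stepTgt t))
    (hts : G.adj (stepCol s) (stepSrc t) (stepTgt s))
    (hdisj : ((s :: P).map stepSrc).Disjoint ((t :: Q).map stepSrc)) :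
    G.IsAltCycle (TwoEC.splice s t P Q) := by
  obtain ⟨-, hadjP, hchP, hndP⟩ := isAltCycle_iff.1 hP
  obtain ⟨-, hadjQ, hchQ, hndQ⟩ := isAltCycle_iff.1 hQ
  refine isAltCycle_iff.2 ⟨List.cons_ne_nil _ _, ?_, ?_, ?_⟩
  · simp only [TwoEC.splice, List.mem_cons, List.mem_append]
    rintro x (rfl | hx | rfl | hx)
    · exact hst
    · exact hadjQ x (List.mem_cons_of_mem _ hx)
    · exact hts
    · exact hadjP x (List.mem_cons_of_mem _ hx)
  · rw [Cycle.chain_coe_cons] at hchP hchQ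
    rw [TwoEC.splice, Cycle.chain_coe_cons, List.append_assoc, List.cons_append,
      ← List.cons_append, List.isChain_split]
    -- each crossing step leaves like one removed step and enters like the other
    exact ⟨hchQ.cons_append_singleton_of_imp (fun _ h => ⟨h.1, hcol ▸ h.2⟩)
        (fun _ h => ⟨h.1, hcol ▸ h.2⟩),
      hchP.cons_append_singleton_of_imp (fun _ h => h) (fun _ h => h)⟩
  · exact (map_stepSrc_splice_perm s t P Q).nodup_iff.2 (hndP.append hndQ hdisj)

end IsAltCycle

end TwoEC

open TwoEC in
theorem merge_cycles_of_parallel_same_colour_edges {V : Type} (G : TwoEC V)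
    (C₁ C₂ : List (Step V)) (h₁ : G.IsAltCycle C₁) (h₂ : G.IsAltCycle C₂)
    (hdisj : ∀ v : V, ¬ (visits C₁ v ∧ visits C₂ v))
    (h : ∃ s ∈ C₁, ∃ t ∈ C₂, stepCol s = stepCol t ∧
          G.adj (stepCol s) (stepSrc s) (stepSrc t) ∧
          G.adj (stepCol s) (stepTgt s) (stepTgt t)) :
    ∃ C, G.IsAltCycle C ∧ ∀ v : V, (visits C v ↔ visits C₁ v ∨ visits C₂ v) := by
  obtain ⟨s, hs, t, ht, hcol, hsrc, htgt⟩ := h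
  obtain ⟨P, hP⟩ := List.exists_cons_isRotated_of_mem hs
  obtain ⟨Q, hQ⟩ := List.exists_cons_isRotated_of_mem (stepReverse_mem_walkReverse ht)
  have hvis₁ (v : V) : visits (s :: P) v ↔ visits C₁ v := visits_iff_of_perm hP.perm v
  have hvis₂ (v : V) : visits (stepReverse t :: Q) v ↔ visits C₂ v :=
    (visits_iff_of_perm hQ.perm v).trans visits_walkReverse
  refine ⟨splice s (stepReverse t) P Q,
    (h₁.of_isRotated hP.symm).splice (h₂.walkReverse.of_isRotated hQ.symm) hcol hsrc
      (G.symm _ _ _ htgt) ?_, fun v => ?_⟩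
  · exact List.disjoint_left.2 fun v hv₁ hv₂ =>
      hdisj v ⟨(hvis₁ v).1 (Or.inl hv₁), (hvis₂ v).1 (Or.inl hv₂)⟩
  · rw [visits_splice, hvis₁, hvis₂]
end

section
/- It is NP-complete to decide whether a given 2-edge-coloured graph is supereulerian, via the following reduction that is parsimonious in feasibility: given a 2-edge-coloured graph G, construct G' by adding for each vertex v new vertices v_r and v_b, replacing every red edge uv of G by a red edge u_rv_r and every blue edge uv by a blue edge u_bv_b, and adding a blue edge v_rv and a red edge vv_b for each v; then G' has a spanning closed alternating trail if and only if G has an alternating hamiltonian cycle. -/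
namespace TwoEC

/-- The graph `G'` of the NP-completeness reduction: vertex `(v, none)` is `v`,
`(v, some false)` is `v_r`, `(v, some true)` is `v_b`; every red edge `uv` of `G`
becomes the red edge `u_rv_r`, every blue edge `uv` becomes the blue edge `u_bv_b`,
and we add a blue edge `v_rv` and a red edge `vv_b` for every `v`
(red = `false`, blue = `true`). -/
def reduceG {V : Type} (G : TwoEC V) : TwoEC (V × Option Bool) where
  adj c p q :=
    (∃ u v, G.adj c u v ∧ p = (u, some c) ∧ q = (v, some c)) ∨
    (∃ v, c = true ∧
      ((p = (v, some false) ∧ q = (v, none)) ∨ (q = (v, some false) ∧ p = (v, none)))) ∨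
    (∃ v, c = false ∧
      ((p = (v, none) ∧ q = (v, some true)) ∨ (q = (v, none) ∧ p = (v, some true))))
  symm := by
    rintro c p q (⟨u, v, huv, rfl, rfl⟩ | ⟨v, hc, h⟩ | ⟨v, hc, h⟩)
    · exact Or.inl ⟨v, u, G.symm c u v huv, rfl, rfl⟩
    · exact Or.inr (Or.inl ⟨v, hc, h.symm⟩)
    · exact Or.inr (Or.inr ⟨v, hc, h.symm⟩)
  loopless := by
    rintro c p (⟨u, v, huv, rfl, h2⟩ | ⟨v, hc, (⟨rfl, h2⟩ | ⟨rfl, h2⟩)⟩ |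
      ⟨v, hc, (⟨rfl, h2⟩ | ⟨rfl, h2⟩)⟩) <;> simp_all [G.loopless]

end TwoEC

namespace List

variable {α β : Type*} {R : α → α → Prop}

/-- `l` read cyclically is an `R`-chain: `l ++ l` contains every cyclically consecutive pair. -/
def IsCyclicChain (R : α → α → Prop) (l : List α) : Prop :=
  (l ++ l).IsChain R

theorem isCyclicChain_iff {l : List α} :
    l.IsCyclicChain R ↔ l.IsChain R ∧ ∀ x ∈ l.getLast?, ∀ y ∈ l.head?, R x y := by
  rw [IsCyclicChain, isChain_append, and_self_left]

theorem IsCyclicChain.imp {S : α → α → Prop} (H : ∀ a b, R a b → S a b) {l : List α}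
    (h : l.IsCyclicChain R) : l.IsCyclicChain S :=
  IsChain.imp H h

theorem IsCyclicChain.append_comm {l₁ l₂ : List α} (h : (l₁ ++ l₂).IsCyclicChain R) :
    (l₂ ++ l₁).IsCyclicChain R := by
  rcases eq_or_ne (l₁ ++ l₂) [] with hnil | hne
  · simp_all [IsCyclicChain]
  have h3 : (l₁ ++ l₂ ++ (l₁ ++ l₂) ++ (l₁ ++ l₂)).IsChain R := h.append_overlap h hne
  exact h3.infix ⟨l₁, l₂, by simp⟩

theorem IsCyclicChain.cons_append_singleton {a : α} {l : List α}
    (h : (a :: l).IsCyclicChain R) : (a :: l ++ [a]).IsChain R :=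
  h.infix ⟨[], l, by simp⟩

theorem IsCyclicChain.exists_rel {l : List α} (h : l.IsCyclicChain R) {a : α} (ha : a ∈ l) :
    ∃ b ∈ l, R a b := by
  obtain ⟨l₁, l₂, rfl⟩ := append_of_mem ha
  obtain ⟨b, t, hbt⟩ := exists_cons_of_ne_nil (show l₂ ++ l₁ ++ a :: l₂ ≠ [] by simp)
  have hb : b ∈ l₁ ++ a :: l₂ := by
    have : b ∈ l₂ ++ l₁ ++ a :: l₂ := hbt ▸ mem_cons_self
    simp only [mem_append, mem_cons] at this ⊢
    tauto
  refine ⟨b, hb, isChain_iff_forall_rel_of_append_cons_cons.1 h (l₁ := l₁) (l₂ := t) ?_⟩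
  simp [← hbt]

theorem map_eq_map_of_isChain {f g : α → β} :
    ∀ {a b : α} {l : List α}, (a :: l ++ [b]).IsChain (fun x y => f x = g y) →
      (a :: l).map f = (l ++ [b]).map g
  | _, _, [], h => by simpa using h
  | _, _, _ :: _, h => by
    simp only [cons_append, isChain_cons_cons] at h
    simp only [map_cons, cons_append, h.1, ← map_eq_map_of_isChain h.2]

theorem IsCyclicChain.map_isRotated {f g : α → β} {l : List α}
    (h : l.IsCyclicChain (fun x y => f x = g y)) : l.map f ~r l.map g := by
  cases l with
  | nil => rfl
  | cons a l =>
    rw [map_eq_map_of_isChain h.cons_append_singleton]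
    simpa using (IsRotated.cons_append_singleton (a := g a) (l := l.map g)).symm

end List

namespace TwoEC

open List

variable {V : Type} {G : TwoEC V}

def AltLink (s t : Step V) : Prop :=
  stepTgt s = stepSrc t ∧ stepCol s ≠ stepCol t

def IsClosedAltWalk (G : TwoEC V) (L : List (Step V)) : Prop :=
  L ≠ [] ∧ (∀ s ∈ L, G.adj (stepCol s) (stepSrc s) (stepTgt s)) ∧ L.IsCyclicChain AltLink

theorem exists_isAltWalk_and_colour_ne_iff {L : List (Step V)} :
    ((∃ u, G.IsAltWalk u u L) ∧ lastColour L ≠ firstColour L) ↔ G.IsClosedAltWalk L := by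
  rcases eq_or_ne L [] with rfl | hL
  · simp [IsAltWalk, IsClosedAltWalk]
  simp only [IsAltWalk, IsClosedAltWalk, lastColour, firstColour, isCyclicChain_iff, AltLink,
    head?_eq_some_head hL, getLast?_eq_some_getLast hL, Option.map_some, Option.mem_def,
    Option.some.injEq, forall_eq', ne_eq, hL, not_false_eq_true, true_and]
  constructor
  · rintro ⟨⟨u, hsrc, htgt, hadj, hchain⟩, hcol⟩
    exact ⟨hadj, hchain, htgt.trans hsrc.symm, hcol⟩
  · rintro ⟨hadj, hchain, hlink, hcol⟩
    exact ⟨⟨_, rfl, hlink, hadj, hchain⟩, hcol⟩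

theorem isClosedAltTrail_iff {L : List (Step V)} :
    G.IsClosedAltTrail L ↔ G.IsClosedAltWalk L ∧ (L.map stepEdge).Nodup := by
  rw [← exists_isAltWalk_and_colour_ne_iff, IsClosedAltTrail]
  simp only [IsAltTrail]
  grind

theorem isAltCycle_iff_s18 {L : List (Step V)} :
    G.IsAltCycle L ↔ G.IsClosedAltWalk L ∧ (L.map stepSrc).Nodup := by
  rw [← exists_isAltWalk_and_colour_ne_iff, IsAltCycle]
  tauto

theorem IsClosedAltWalk.append_comm {L₁ L₂ : List (Step V)} (h : G.IsClosedAltWalk (L₁ ++ L₂)) :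
    G.IsClosedAltWalk (L₂ ++ L₁) := by
  obtain ⟨hne, hadj, hchain⟩ := h
  refine ⟨by simpa [and_comm] using hne, fun s hs => hadj s ?_, hchain.append_comm⟩
  rw [mem_append] at hs ⊢
  exact hs.symm

theorem IsClosedAltTrail.append_comm {L₁ L₂ : List (Step V)} (h : G.IsClosedAltTrail (L₁ ++ L₂)) :
    G.IsClosedAltTrail (L₂ ++ L₁) := by
  rw [isClosedAltTrail_iff, map_append] at h ⊢
  exact ⟨h.1.append_comm, perm_append_comm.nodup_iff.1 h.2⟩

theorem visits_append_comm {L₁ L₂ : List (Step V)} {v : V} :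
    visits (L₁ ++ L₂) v ↔ visits (L₂ ++ L₁) v := by
  simp only [visits, map_append, mem_append]
  tauto

theorem IsClosedAltWalk.map_tgt_isRotated {L : List (Step V)} (h : G.IsClosedAltWalk L) :
    L.map stepTgt ~r L.map stepSrc :=
  (h.2.2.imp fun _ _ hst => hst.1).map_isRotated

theorem IsClosedAltWalk.visits_iff {L : List (Step V)} (h : G.IsClosedAltWalk L) {v : V} :
    visits L v ↔ v ∈ L.map stepTgt := by
  rw [visits, h.map_tgt_isRotated.mem_iff, or_self]

/-- A repeated edge `uv` of an alternating cycle would be traversed as `u → v` and then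
immediately back as `v → u` in the same colour. -/
theorem IsClosedAltWalk.nodup_edges {L : List (Step V)} (h : G.IsClosedAltWalk L)
    (hsrc : (L.map stepSrc).Nodup) : (L.map stepEdge).Nodup := by
  refine hsrc.of_map _ |>.map_on fun a ha b hb hab => ?_
  have src_inj := inj_on_of_nodup_map hsrc
  simp only [stepEdge, Prod.mk.injEq, Sym2.eq_iff] at hab
  obtain ⟨hcol, ⟨hsrc_ab, -⟩ | ⟨hab₁, hab₂⟩⟩ := hab
  · exact src_inj ha hb hsrc_ab
  obtain ⟨c, hc, hac⟩ := h.2.2.exists_rel ha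
  have hcb : c = b := src_inj hc hb (hac.1.symm.trans hab₂)
  exact absurd hcol (hcb ▸ hac.2)

def liftStep (s : Step V) : Step (V × Option Bool) :=
  ((stepSrc s, some (stepCol s)), stepCol s, (stepTgt s, some (stepCol s)))

def downStep (v : V) (c : Bool) : Step (V × Option Bool) := ((v, some c), !c, (v, none))

def upStep (v : V) (c : Bool) : Step (V × Option Bool) := ((v, none), c, (v, some !c))

/-- A step `u → v` of colour `c` becomes `u_c → v_c → v → v_{!c}`. -/
def expandStep (s : Step V) : List (Step (V × Option Bool)) :=
  [liftStep s, downStep (stepTgt s) (stepCol s), upStep (stepTgt s) (stepCol s)]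

def expand (L : List (Step V)) : List (Step (V × Option Bool)) := L.flatMap expandStep

theorem reduceG_adj_liftStep_iff {s : Step V} :
    (reduceG G).adj (stepCol (liftStep s)) (stepSrc (liftStep s)) (stepTgt (liftStep s)) ↔
      G.adj (stepCol s) (stepSrc s) (stepTgt s) := by
  simp [reduceG, liftStep, stepSrc, stepTgt, stepCol]

theorem reduceG_adj_downStep (v : V) (c : Bool) :
    (reduceG G).adj (stepCol (downStep v c)) (stepSrc (downStep v c))
      (stepTgt (downStep v c)) := by
  cases c <;> simp [reduceG, downStep, stepSrc, stepTgt, stepCol]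

theorem reduceG_adj_upStep (v : V) (c : Bool) :
    (reduceG G).adj (stepCol (upStep v c)) (stepSrc (upStep v c)) (stepTgt (upStep v c)) := by
  cases c <;> simp [reduceG, upStep, stepSrc, stepTgt, stepCol]

theorem reduceG_step_cases {s : Step (V × Option Bool)}
    (h : (reduceG G).adj (stepCol s) (stepSrc s) (stepTgt s)) :
    (∃ a, s = liftStep a) ∨ (∃ v c, s = downStep v c) ∨ (∃ v c, s = upStep v c) := by
  obtain ⟨p, c, q⟩ := s
  change (reduceG G).adj c p q at h
  rcases h with ⟨u, v, -, rfl, rfl⟩ | ⟨v, rfl, ⟨rfl, rfl⟩ | ⟨rfl, rfl⟩⟩ |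
    ⟨v, rfl, ⟨rfl, rfl⟩ | ⟨rfl, rfl⟩⟩
  · exact Or.inl ⟨(u, c, v), rfl⟩
  · exact Or.inr (Or.inl ⟨v, false, rfl⟩)
  · exact Or.inr (Or.inr ⟨v, true, rfl⟩)
  · exact Or.inr (Or.inr ⟨v, false, rfl⟩)
  · exact Or.inr (Or.inl ⟨v, true, rfl⟩)

theorem altLink_upStep_liftStep_iff {a b : Step V} :
    AltLink (upStep (stepTgt a) (stepCol a)) (liftStep b) ↔ AltLink a b := by
  obtain ⟨_, c, _⟩ := a
  obtain ⟨_, d, _⟩ := b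
  cases c <;> cases d <;> simp [AltLink, upStep, liftStep, stepSrc, stepTgt, stepCol]

theorem isChain_expandStep (s : Step V) : (expandStep s).IsChain AltLink := by
  simp [expandStep, AltLink, liftStep, downStep, upStep, stepSrc, stepTgt, stepCol]

theorem isCyclicChain_expand_iff {L : List (Step V)} :
    (expand L).IsCyclicChain AltLink ↔ L.IsCyclicChain AltLink := by
  rw [IsCyclicChain, IsCyclicChain, expand, ← flatMap_append, flatMap_def]
  rw [isChain_flatten (by simp [expandStep]), isChain_map]
  simp only [forall_mem_map, isChain_expandStep, implies_true, true_and]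
  simp only [expandStep, getLast?_cons_cons, getLast?_singleton, head?_cons, Option.mem_def,
    Option.some.injEq, forall_eq', altLink_upStep_liftStep_iff]

theorem expand_ne_nil_iff {L : List (Step V)} : expand L ≠ [] ↔ L ≠ [] := by
  simp only [expand, ne_eq, flatMap_eq_nil_iff, expandStep, reduceCtorEq, imp_false,
    ← eq_nil_iff_forall_not_mem]

theorem disjoint_edges_expandStep_iff {a b : Step V} :
    ((expandStep a).map stepEdge).Disjoint ((expandStep b).map stepEdge) ↔
      stepEdge a ≠ stepEdge b ∧ stepTgt a ≠ stepTgt b := by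
  obtain ⟨u, c, v⟩ := a
  obtain ⟨u', d, v'⟩ := b
  cases c <;> cases d <;>
    simp [expandStep, liftStep, downStep, upStep, stepEdge, stepSrc, stepTgt, stepCol, eq_comm]

theorem nodup_edges_expandStep (s : Step V) : ((expandStep s).map stepEdge).Nodup := by
  obtain ⟨u, c, v⟩ := s
  cases c <;> simp [expandStep, liftStep, downStep, upStep, stepEdge, stepSrc, stepTgt, stepCol]

theorem forall_reduceG_adj_expand_iff {L : List (Step V)} :
    (∀ t ∈ expand L, (reduceG G).adj (stepCol t) (stepSrc t) (stepTgt t)) ↔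
      ∀ s ∈ L, G.adj (stepCol s) (stepSrc s) (stepTgt s) := by
  simp only [expand, mem_flatMap, forall_exists_index, and_imp]
  refine ⟨fun h s hs => reduceG_adj_liftStep_iff.1 (h _ s hs (by simp [expandStep])),
    fun h t s hs ht => ?_⟩
  simp only [expandStep, mem_cons, not_mem_nil, or_false] at ht
  rcases ht with rfl | rfl | rfl
  exacts [reduceG_adj_liftStep_iff.2 (h s hs), reduceG_adj_downStep _ _, reduceG_adj_upStep _ _]

theorem isClosedAltWalk_expand_iff {L : List (Step V)} :
    (reduceG G).IsClosedAltWalk (expand L) ↔ G.IsClosedAltWalk L :=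
  and_congr expand_ne_nil_iff (and_congr forall_reduceG_adj_expand_iff isCyclicChain_expand_iff)

theorem nodup_edges_expand_iff {L : List (Step V)} :
    ((expand L).map stepEdge).Nodup ↔ (L.map stepEdge).Nodup ∧ (L.map stepTgt).Nodup := by
  rw [expand, map_flatMap, nodup_flatMap]
  simp only [nodup_edges_expandStep, implies_true, true_and]
  rw [Nodup, Nodup, pairwise_map, pairwise_map, ← pairwise_and_iff]
  exact Pairwise.iff fun _ _ => disjoint_edges_expandStep_iff

theorem isClosedAltTrail_expand_iff {L : List (Step V)} :
    (reduceG G).IsClosedAltTrail (expand L) ↔ G.IsAltCycle L := by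
  rw [isClosedAltTrail_iff, isAltCycle_iff_s18, isClosedAltWalk_expand_iff, nodup_edges_expand_iff]
  constructor
  · rintro ⟨hL, -, htgt⟩
    exact ⟨hL, hL.map_tgt_isRotated.nodup_iff.1 htgt⟩
  · rintro ⟨hL, hsrc⟩
    exact ⟨hL, hL.nodup_edges hsrc, hL.map_tgt_isRotated.nodup_iff.2 hsrc⟩

theorem visits_expand_iff {L : List (Step V)} {p : V × Option Bool} :
    visits (expand L) p ↔ ∃ s ∈ L, visits (expandStep s) p := by
  simp only [visits, expand, map_flatMap, mem_flatMap, ← exists_or, ← and_or_left]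

theorem visits_expandStep_none_iff {s : Step V} {v : V} :
    visits (expandStep s) (v, none) ↔ stepTgt s = v := by
  simp [visits, expandStep, liftStep, downStep, upStep, stepSrc, stepTgt, eq_comm]

theorem visits_expandStep_some (s : Step V) (b : Bool) :
    visits (expandStep s) (stepTgt s, some b) := by
  cases b <;> cases hc : stepCol s <;>
    simp [visits, expandStep, liftStep, downStep, upStep, stepSrc, stepTgt, hc]

theorem IsClosedAltWalk.forall_visits_expand_iff {L : List (Step V)} (hL : G.IsClosedAltWalk L) :
    (∀ p, visits (expand L) p) ↔ ∀ v, visits L v := by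
  simp only [hL.visits_iff, mem_map, visits_expand_iff]
  refine ⟨fun h v => ?_, ?_⟩
  · obtain ⟨s, hs, hv⟩ := h (v, none)
    exact ⟨s, hs, visits_expandStep_none_iff.1 hv⟩
  · rintro h ⟨v, _ | b⟩ <;> obtain ⟨s, hs, rfl⟩ := h v
    exacts [⟨s, hs, visits_expandStep_none_iff.2 rfl⟩, ⟨s, hs, visits_expandStep_some s b⟩]

theorem eq_downStep_of_altLink_liftStep {a : Step V} {t : Step (V × Option Bool)}
    (ht : (reduceG G).adj (stepCol t) (stepSrc t) (stepTgt t)) (h : AltLink (liftStep a) t) :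
    t = downStep (stepTgt a) (stepCol a) := by
  obtain ⟨u, c, v⟩ := a
  rcases reduceG_step_cases ht with ⟨⟨w, d, w'⟩, rfl⟩ | ⟨w, d, rfl⟩ | ⟨w, d, rfl⟩ <;>
    cases c <;> cases d <;>
      simp_all [AltLink, liftStep, downStep, upStep, stepSrc, stepTgt, stepCol]

theorem eq_upStep_of_altLink_downStep {v : V} {c : Bool} {t : Step (V × Option Bool)}
    (ht : (reduceG G).adj (stepCol t) (stepSrc t) (stepTgt t)) (h : AltLink (downStep v c) t) :
    t = upStep v c := by
  rcases reduceG_step_cases ht with ⟨⟨w, d, w'⟩, rfl⟩ | ⟨w, d, rfl⟩ | ⟨w, d, rfl⟩ <;>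
    cases c <;> cases d <;>
      simp_all [AltLink, liftStep, downStep, upStep, stepSrc, stepTgt, stepCol]

theorem exists_eq_liftStep_of_altLink_upStep {v : V} {c : Bool} {t : Step (V × Option Bool)}
    (ht : (reduceG G).adj (stepCol t) (stepSrc t) (stepTgt t)) (h : AltLink (upStep v c) t) :
    ∃ a, t = liftStep a := by
  rcases reduceG_step_cases ht with ⟨⟨w, d, w'⟩, rfl⟩ | ⟨w, d, rfl⟩ | ⟨w, d, rfl⟩ <;>
    cases c <;> cases d <;>
      simp_all [AltLink, liftStep, downStep, upStep, stepSrc, stepTgt, stepCol]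

/-- Being followed by a lifted step forces the walk to stop at the end of an expanded step. -/
theorem exists_expand_eq_of_isChain :
    ∀ (a b : Step V) (T : List (Step (V × Option Bool))),
      (∀ t ∈ T, (reduceG G).adj (stepCol t) (stepSrc t) (stepTgt t)) →
      (liftStep a :: T ++ [liftStep b]).IsChain AltLink → ∃ M, liftStep a :: T = expand M
  | a, b, [], _, h => by
    obtain ⟨u, c, v⟩ := a
    obtain ⟨u', d, v'⟩ := b
    cases c <;> cases d <;> simp [AltLink, liftStep, stepSrc, stepTgt, stepCol] at h
  | a, b, [t], hT, h => by
    simp only [cons_append, isChain_cons_cons] at h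
    rw [eq_downStep_of_altLink_liftStep (hT t mem_cons_self) h.1] at h
    simp [AltLink, liftStep, downStep, stepSrc, stepTgt] at h
  | a, b, t₁ :: t₂ :: T, hT, h => by
    simp only [cons_append, isChain_cons_cons] at h
    obtain rfl := eq_downStep_of_altLink_liftStep (hT t₁ (by simp)) h.1
    obtain rfl := eq_upStep_of_altLink_downStep (hT t₂ (by simp)) h.2.1
    cases T with
    | nil => exact ⟨[a], rfl⟩
    | cons t₃ T =>
      rw [cons_append, isChain_cons_cons] at h
      obtain ⟨a', rfl⟩ := exists_eq_liftStep_of_altLink_upStep (hT t₃ (by simp)) h.2.2.1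
      obtain ⟨M, hM⟩ :=
        exists_expand_eq_of_isChain a' b T (fun t ht => hT t (by simp [ht])) h.2.2.2
      exact ⟨a :: M, by rw [expand, flatMap_cons, ← expand, ← hM]; rfl⟩

theorem IsClosedAltWalk.exists_liftStep_mem {T : List (Step (V × Option Bool))}
    (hT : (reduceG G).IsClosedAltWalk T) : ∃ a, liftStep a ∈ T := by
  obtain ⟨hne, hadj, hchain⟩ := hT
  have lift_of_up {v c} (hup : upStep v c ∈ T) : ∃ a, liftStep a ∈ T := by
    obtain ⟨t, ht, hlink⟩ := hchain.exists_rel hup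
    obtain ⟨a, rfl⟩ := exists_eq_liftStep_of_altLink_upStep (hadj t ht) hlink
    exact ⟨a, ht⟩
  obtain ⟨t, ht⟩ := exists_mem_of_ne_nil T hne
  rcases reduceG_step_cases (hadj t ht) with ⟨a, rfl⟩ | ⟨v, c, rfl⟩ | ⟨v, c, rfl⟩
  · exact ⟨a, ht⟩
  · obtain ⟨t', ht', hlink⟩ := hchain.exists_rel ht
    obtain rfl := eq_upStep_of_altLink_downStep (hadj t' ht') hlink
    exact lift_of_up ht'
  · exact lift_of_up ht

theorem IsClosedAltWalk.exists_append_eq_expand {T : List (Step (V × Option Bool))}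
    (hT : (reduceG G).IsClosedAltWalk T) : ∃ A B M, T = A ++ B ∧ B ++ A = expand M := by
  obtain ⟨a, ha⟩ := hT.exists_liftStep_mem
  obtain ⟨A, B, rfl⟩ := append_of_mem ha
  have hchain : (liftStep a :: (B ++ A) ++ [liftStep a]).IsChain AltLink :=
    IsChain.infix hT.2.2 ⟨A, B, by simp⟩
  obtain ⟨M, hM⟩ := exists_expand_eq_of_isChain a a (B ++ A)
    (fun t ht => hT.2.1 t (by simp only [mem_append, mem_cons] at ht ⊢; tauto)) hchain
  exact ⟨A, liftStep a :: B, M, rfl, hM⟩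

end TwoEC

open TwoEC in
theorem altHamCycle_iff_reduction_supereulerian {V : Type} (G : TwoEC V) :
    (∃ L, G.IsAltHamCycle L) ↔ (reduceG G).Supereulerian := by
  constructor
  · rintro ⟨L, hL, hspan⟩
    have hW := (isAltCycle_iff_s18.1 hL).1
    exact ⟨expand L, isClosedAltTrail_expand_iff.2 hL, hW.forall_visits_expand_iff.2 hspan⟩
  · rintro ⟨T, hT, hspan⟩
    obtain ⟨A, B, M, rfl, hM⟩ := (isClosedAltTrail_iff.1 hT).1.exists_append_eq_expand
    have hM' : G.IsAltCycle M := isClosedAltTrail_expand_iff.1 (hM ▸ hT.append_comm)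
    refine ⟨M, hM', (isAltCycle_iff_s18.1 hM').1.forall_visits_expand_iff.1 fun p => ?_⟩
    exact hM ▸ visits_append_comm.1 (hspan p)
end
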